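/- arXiv:1008.3716 — 2 statements merged into one kernel-verified Lean document; each statement's English description precedes it below -/
import Mathlib

section
/- Let y_F be the uniform circular chain of N atoms with nearest-neighbor spacing Fε. Then for every u ∈ 𝒰, δ²E^CB(y_F)[u,u] ≥ min{ φ''(F) + 4 φ''(2F), (φ'(F) + 2 φ'(2F))/F } ‖u'‖²_{ℓ²_ε}. Moreover, for C > 0 the radial expansion ũ ∈ 𝒰 given by ũ_ℓ = C y_{F,ℓ} satisfies δ²E^CB(y_F)[ũ,ũ] = (φ''(F) + 4 φ''(2F)) ‖ũ'‖²_{ℓ²_ε}, and if N is even the zig-zag û ∈ 𝒰 given by û_ℓ = (−1)^ℓ C y_{F,ℓ} satisfies δ²E^CB(y_F)[û,û] = ((φ'(F) + 2 φ'(2F))/F) ‖û'‖²_{ℓ²_ε}. -/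
noncomputable section

open Real Finset

/-- Euclidean norm on `ℝ × ℝ`. -/
def enorm2 (v : ℝ × ℝ) : ℝ := Real.sqrt (v.1 ^ 2 + v.2 ^ 2)

/-- Euclidean dot product on `ℝ × ℝ`. -/
def edot (v w : ℝ × ℝ) : ℝ := v.1 * w.1 + v.2 * w.2

/-- `N`-periodic mean-zero displacements (the space `𝒰`). -/
def IsDisp (N : ℕ) (u : ℤ → ℝ × ℝ) : Prop :=
  (∀ ℓ : ℤ, u (ℓ + (N : ℤ)) = u ℓ) ∧ ∑ ℓ ∈ Finset.Icc (1 : ℤ) (N : ℤ), u ℓ = 0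

/-- Constrained displacements (the space `𝒰̃`): second component vanishes. -/
def IsDisp1D (N : ℕ) (u : ℤ → ℝ × ℝ) : Prop :=
  IsDisp N u ∧ ∀ ℓ : ℤ, (u ℓ).2 = 0

/-- Backward difference `u'_ℓ = (u_ℓ - u_{ℓ-1})/ε`. -/
def bd (ε : ℝ) (u : ℤ → ℝ × ℝ) (ℓ : ℤ) : ℝ × ℝ := ε⁻¹ • (u ℓ - u (ℓ - 1))

/-- The inner product `⟨v,w⟩ = ε ∑_{ℓ=1}^N v_ℓ · w_ℓ`. -/
def ip (N : ℕ) (ε : ℝ) (v w : ℤ → ℝ × ℝ) : ℝ :=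
  ε * ∑ ℓ ∈ Finset.Icc (1 : ℤ) (N : ℤ), edot (v ℓ) (w ℓ)

/-- The norm `‖v‖_{ℓ²_ε}`. -/
def nrm (N : ℕ) (ε : ℝ) (v : ℤ → ℝ × ℝ) : ℝ :=
  Real.sqrt (ε * ∑ ℓ ∈ Finset.Icc (1 : ℤ) (N : ℤ), (enorm2 (v ℓ)) ^ 2)

/-- The atomistic energy `E^a`. -/
def Ea (N : ℕ) (ε : ℝ) (φ : ℝ → ℝ) (y : ℤ → ℝ × ℝ) : ℝ :=
  ε * ∑ ℓ ∈ Finset.Icc (1 : ℤ) (N : ℤ),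
    (φ (enorm2 (bd ε y ℓ)) + φ (enorm2 (bd ε y (ℓ + 1) + bd ε y ℓ)))

/-- The Cauchy–Born energy `E^CB`. -/
def ECB (N : ℕ) (ε : ℝ) (φ : ℝ → ℝ) (y : ℤ → ℝ × ℝ) : ℝ :=
  ε * ∑ ℓ ∈ Finset.Icc (1 : ℤ) (N : ℤ),
    (φ (enorm2 (bd ε y ℓ)) + φ (2 * enorm2 (bd ε y ℓ)))

/-- The bond-angle energy `E^b`. -/
def Eb (N : ℕ) (ε α : ℝ) (y : ℤ → ℝ × ℝ) : ℝ :=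
  ε * ∑ ℓ ∈ Finset.Icc (1 : ℤ) (N : ℤ),
    α * (1 - edot (bd ε y (ℓ + 1)) (bd ε y ℓ) /
      (enorm2 (bd ε y (ℓ + 1)) * enorm2 (bd ε y ℓ)))

/-- The quasi-nonlocal energy `E^QNL`. -/
def EQNL (N K : ℕ) (ε : ℝ) (φ : ℝ → ℝ) (y : ℤ → ℝ × ℝ) : ℝ :=
  ε * ∑ ℓ ∈ Finset.Icc (1 : ℤ) (N : ℤ), φ (enorm2 (bd ε y ℓ))
  + ε * ∑ ℓ ∈ Finset.Icc (1 : ℤ) (K : ℤ), φ (enorm2 (bd ε y (ℓ + 1) + bd ε y ℓ))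
  + ε * ∑ ℓ ∈ Finset.Icc ((K : ℤ) + 2) (N : ℤ), φ (2 * enorm2 (bd ε y ℓ))
  + ε / 2 * φ (2 * enorm2 (bd ε y 1)) + ε / 2 * φ (2 * enorm2 (bd ε y ((K : ℤ) + 1)))

/-- First variation `δE(y)[u] = (d/dt) E(y + t u) |_{t=0}`. -/
def dE (E : (ℤ → ℝ × ℝ) → ℝ) (y u : ℤ → ℝ × ℝ) : ℝ :=
  deriv (fun t : ℝ => E (fun ℓ => y ℓ + t • u ℓ)) 0

/-- Second variation `δ²E(y)[u,v] = (∂²/∂t∂s) E(y + t u + s v) |_{t=s=0}`. -/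
def d2E (E : (ℤ → ℝ × ℝ) → ℝ) (y u v : ℤ → ℝ × ℝ) : ℝ :=
  deriv (fun s : ℝ => deriv (fun t : ℝ => E (fun ℓ => y ℓ + t • u ℓ + s • v ℓ)) 0) 0

/-- The linear chain `y_{F,ℓ} = (Fεℓ, 0)`. -/
def yLin (ε F : ℝ) : ℤ → ℝ × ℝ := fun ℓ => (F * ε * ℓ, 0)

/-- The uniform circular chain of radius `R = Fε/(2 sin(πε))`. -/
def yCirc (ε F : ℝ) : ℤ → ℝ × ℝ := fun ℓ =>
  (F * ε / (2 * Real.sin (π * ε)) * Real.cos (2 * π * ε * ℓ),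
   F * ε / (2 * Real.sin (π * ε)) * Real.sin (2 * π * ε * ℓ))

/-!
Every bond of the circular chain has length `F`. For the Cauchy–Born pair potential
`ψ(r) = φ(r) + φ(2r)` and a bond `a` with `|a| = F`, the second derivative of `t ↦ ψ(|a + t b|)` at `0`
is `ψ''(F) (a·b/F)² + ψ'(F)/F (|b|² - (a·b/F)²)`, and Cauchy–Schwarz gives `0 ≤ (a·b/F)² ≤ |b|²`, so
every bond contributes at least the smaller stiffness times `|b|²`. The radial expansion has `u'_ℓ`
parallel to `y'_ℓ` and sees only `ψ''(F)`; the zig-zag has `u'_ℓ` proportional to `y_ℓ + y_{ℓ-1}`,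
which is orthogonal to the chord `y_ℓ - y_{ℓ-1}` of the circle, and sees only `ψ'(F)/F`. Both are
mean-zero because `y_ℓ = R w^ℓ` with `w = exp(2πi/N)`, and `w`, resp. `-w` for even `N > 2`, is an
`N`-th root of unity other than `1`.
-/

open Filter Topology

lemma edot_self (v : ℝ × ℝ) : edot v v = enorm2 v ^ 2 := by
  rw [enorm2, Real.sq_sqrt (by positivity), edot]
  ring

lemma sq_edot_le (v w : ℝ × ℝ) : edot v w ^ 2 ≤ edot v v * edot w w := by
  simp only [edot]
  nlinarith [sq_nonneg (v.1 * w.2 - v.2 * w.1)]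

lemma edot_smul_left (C : ℝ) (v w : ℝ × ℝ) : edot (C • v) w = C * edot v w := by
  simp only [edot, Prod.smul_fst, Prod.smul_snd, smul_eq_mul]
  ring

lemma edot_smul_right (C : ℝ) (v w : ℝ × ℝ) : edot v (C • w) = C * edot v w := by
  simp only [edot, Prod.smul_fst, Prod.smul_snd, smul_eq_mul]
  ring

lemma sq_edot_div_le {a : ℝ × ℝ} {F : ℝ} (ha : enorm2 a = F) (hF : 0 < F) (b : ℝ × ℝ) :
    (edot a b / F) ^ 2 ≤ edot b b := by
  have h := sq_edot_le a b
  rw [edot_self a, ha] at h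
  rw [div_pow, div_le_iff₀ (by positivity)]
  linarith

lemma bd_add_smul (ε : ℝ) (y u : ℤ → ℝ × ℝ) (t : ℝ) (ℓ : ℤ) :
    bd ε (fun m => y m + t • u m) ℓ = bd ε y ℓ + t • bd ε u ℓ := by
  simp only [bd, smul_sub, smul_smul]
  module

lemma bd_smul (ε C : ℝ) (u : ℤ → ℝ × ℝ) (ℓ : ℤ) :
    bd ε (fun m => C • u m) ℓ = C • bd ε u ℓ := by
  simp only [bd, smul_sub, smul_smul]
  module

lemma nrm_sq {N : ℕ} {ε : ℝ} (hε : 0 ≤ ε) (v : ℤ → ℝ × ℝ) :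
    nrm N ε v ^ 2 = ε * ∑ ℓ ∈ Icc (1 : ℤ) N, edot (v ℓ) (v ℓ) := by
  simp only [edot_self]
  exact Real.sq_sqrt (mul_nonneg hε (sum_nonneg fun ℓ _ => sq_nonneg _))

lemma edot_bd_zigzag_eq_zero {ε ρ : ℝ} {y : ℤ → ℝ × ℝ} (hρ : ∀ ℓ, enorm2 (y ℓ) = ρ) (C : ℝ)
    (ℓ : ℤ) : edot (bd ε y ℓ) (bd ε (fun m => ((-1 : ℝ) ^ m * C) • y m) ℓ) = 0 := by
  have hsign : (-1 : ℝ) ^ (ℓ - 1) = -(-1) ^ ℓ := by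
    rw [zpow_sub_one₀ (by norm_num)]
    norm_num
  have h : edot (bd ε y ℓ) (bd ε (fun m => ((-1 : ℝ) ^ m * C) • y m) ℓ)
      = ε⁻¹ * ε⁻¹ * ((-1) ^ ℓ * C) * (edot (y ℓ) (y ℓ) - edot (y (ℓ - 1)) (y (ℓ - 1))) := by
    simp only [bd, edot, Prod.smul_fst, Prod.smul_snd, Prod.fst_sub, Prod.snd_sub, smul_eq_mul,
      hsign]
    ring
  rw [h, edot_self, edot_self, hρ, hρ, sub_self, mul_zero]

lemma min_mul_le_add_mul_sub (A B : ℝ) {p d : ℝ} (hp : 0 ≤ p) (hpd : p ≤ d) :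
    min A B * d ≤ A * p + B * (d - p) := by
  have hA := mul_le_mul_of_nonneg_right (min_le_left A B) hp
  have hB := mul_le_mul_of_nonneg_right (min_le_right A B) (sub_nonneg.2 hpd)
  linarith

lemma sum_Icc_one_eq_sum_range {M : Type*} [AddCommMonoid M] (f : ℤ → M) (N : ℕ) :
    ∑ ℓ ∈ Icc (1 : ℤ) N, f ℓ = ∑ k ∈ range N, f (k + 1) := by
  induction N with
  | zero => simp
  | succ n ih =>
    rw [sum_range_succ, ← ih, Nat.cast_succ,
      ← insert_Icc_right_eq_Icc_add_one (by omega), sum_insert (by simp), add_comm]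

lemma sum_Icc_zpow_eq_zero {K : Type*} [Field K] {z : K} {N : ℕ} (hzN : z ^ N = 1)
    (hz : z ≠ 1) : ∑ ℓ ∈ Icc (1 : ℤ) N, z ^ ℓ = 0 := by
  rw [sum_Icc_one_eq_sum_range]
  simp_rw [← Nat.cast_succ, zpow_natCast, pow_succ, ← sum_mul, geom_sum_eq hz, hzN]
  simp

lemma isDisp_geometric {N : ℕ} (hN : 0 < N) {z : ℂ} (hzN : z ^ N = 1) (hz : z ≠ 1) (c : ℂ) :
    IsDisp N (fun ℓ => Complex.equivRealProdLm (c * z ^ ℓ)) := by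
  have hz0 : z ≠ 0 := (IsUnit.of_pow_eq_one hzN hN.ne').ne_zero
  refine ⟨fun ℓ => ?_, ?_⟩
  · simp only [zpow_add₀ hz0, zpow_natCast, hzN, mul_one]
  · rw [← map_sum, ← mul_sum, sum_Icc_zpow_eq_zero hzN hz, mul_zero, map_zero]

lemma IsDisp.smul {N : ℕ} {u : ℤ → ℝ × ℝ} (hu : IsDisp N u) (C : ℝ) :
    IsDisp N (fun ℓ => C • u ℓ) :=
  ⟨fun ℓ => by simp only [hu.1], by rw [← smul_sum, hu.2, smul_zero]⟩

lemma enorm2_equivRealProdLm (z : ℂ) : enorm2 (Complex.equivRealProdLm z) = ‖z‖ := by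
  rw [Complex.norm_def, Complex.normSq_apply, enorm2, Complex.equivRealProdLm_apply]
  ring_nf

lemma yCirc_eq (ε F : ℝ) (ℓ : ℤ) :
    yCirc ε F ℓ = Complex.equivRealProdLm
      ((F * ε / (2 * Real.sin (π * ε)) : ℝ) * Complex.exp ((2 * π * ε : ℝ) * Complex.I) ^ ℓ) := by
  rw [← Complex.exp_int_mul, show (ℓ : ℂ) * ((2 * π * ε : ℝ) * Complex.I)
    = ((2 * π * ε * ℓ : ℝ) : ℂ) * Complex.I by push_cast; ring]
  simp only [yCirc, Complex.equivRealProdLm_apply, Complex.re_ofReal_mul, Complex.im_ofReal_mul,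
    Complex.exp_ofReal_mul_I_re, Complex.exp_ofReal_mul_I_im]

lemma enorm2_yCirc (ε F : ℝ) (ℓ : ℤ) :
    enorm2 (yCirc ε F ℓ) = |F * ε / (2 * Real.sin (π * ε))| := by
  rw [yCirc_eq, enorm2_equivRealProdLm, norm_mul, norm_zpow, Complex.norm_exp_ofReal_mul_I,
    one_zpow, mul_one, Complex.norm_real, Real.norm_eq_abs]

lemma enorm2_bd_yCirc {ε : ℝ} (F : ℝ) (hε : ε ≠ 0) (hs : Real.sin (π * ε) ≠ 0) (ℓ : ℤ) :
    enorm2 (bd ε (yCirc ε F) ℓ) = |F| := by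
  have hchord : ‖Complex.exp ((2 * π * ε : ℝ) * Complex.I) - 1‖ = |2 * Real.sin (π * ε)| := by
    rw [mul_comm _ Complex.I, Complex.norm_exp_I_mul_ofReal_sub_one, Real.norm_eq_abs]
    ring_nf
  have hw := Complex.norm_exp_ofReal_mul_I (2 * π * ε)
  rw [bd, yCirc_eq, yCirc_eq, ← map_sub, ← map_smul, enorm2_equivRealProdLm, Complex.real_smul,
    zpow_sub_one₀ (Complex.exp_ne_zero _)]
  generalize Complex.exp ((2 * π * ε : ℝ) * Complex.I) = w at hchord hw ⊢
  have hw0 : w ≠ 0 := norm_ne_zero_iff.1 (by rw [hw]; exact one_ne_zero)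
  generalize hR : F * ε / (2 * Real.sin (π * ε)) = R
  rw [show ((ε⁻¹ : ℝ) : ℂ) * ((R : ℂ) * w ^ ℓ - R * (w ^ ℓ * w⁻¹))
      = ((ε⁻¹ : ℝ) : ℂ) * R * w ^ ℓ * w⁻¹ * (w - 1) by field_simp]
  rw [norm_mul, norm_mul, norm_mul, norm_mul, norm_inv, norm_zpow, hw, hchord, one_zpow, inv_one,
    mul_one, mul_one, Complex.norm_real, Complex.norm_real, Real.norm_eq_abs, Real.norm_eq_abs,
    ← hR, ← abs_mul, ← abs_mul]
  congr 1
  generalize Real.sin (π * ε) = s at hs ⊢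
  field_simp

lemma isPrimitiveRoot_exp_inv {N : ℕ} (hN : N ≠ 0) :
    IsPrimitiveRoot (Complex.exp ((2 * π * (N : ℝ)⁻¹ : ℝ) * Complex.I)) N := by
  convert Complex.isPrimitiveRoot_exp N hN using 2
  push_cast
  ring

lemma isDisp_yCirc {N : ℕ} (hN : 2 ≤ N) (F : ℝ) : IsDisp N (yCirc (N : ℝ)⁻¹ F) := by
  have hw := isPrimitiveRoot_exp_inv (N := N) (by omega)
  rw [show yCirc (N : ℝ)⁻¹ F = _ from funext (yCirc_eq _ F)]
  exact isDisp_geometric (by omega) hw.pow_eq_one (hw.ne_one (by omega)) _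

lemma neg_one_zpow_smul_equivRealProdLm (C r : ℝ) (w : ℂ) (ℓ : ℤ) :
    ((-1 : ℝ) ^ ℓ * C) • Complex.equivRealProdLm (r * w ^ ℓ)
      = Complex.equivRealProdLm ((C * r : ℝ) * (-w) ^ ℓ) := by
  rw [← map_smul, Complex.real_smul, ← neg_one_mul w, mul_zpow]
  congr 1
  push_cast
  ring

lemma isDisp_zigzag_yCirc {N : ℕ} (hN : 2 < N) (hE : Even N) (F C : ℝ) :
    IsDisp N (fun ℓ : ℤ => ((-1 : ℝ) ^ ℓ * C) • yCirc (N : ℝ)⁻¹ F ℓ) := by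
  have hw := isPrimitiveRoot_exp_inv (N := N) (by omega)
  simp only [yCirc_eq, neg_one_zpow_smul_equivRealProdLm]
  generalize Complex.exp ((2 * π * (N : ℝ)⁻¹ : ℝ) * Complex.I) = w at hw ⊢
  have hneg : -w ≠ 1 := fun h => by
    have h2 : w ^ 2 = 1 := by rw [← neg_sq, h, one_pow]
    have := Nat.le_of_dvd two_pos (hw.dvd_of_pow_eq_one 2 h2)
    omega
  exact isDisp_geometric (by omega) (by rw [hE.neg_pow, hw.pow_eq_one]) hneg _

def HasSecondDerivAt (f : ℝ → ℝ) (f'' x : ℝ) : Prop :=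
  ∃ f' : ℝ → ℝ, (∀ᶠ y in 𝓝 x, HasDerivAt f (f' y) y) ∧ HasDerivAt f' f'' x

namespace HasSecondDerivAt

variable {f : ℝ → ℝ} {f'' x : ℝ}

lemma deriv_deriv (hf : HasSecondDerivAt f f'' x) : deriv (deriv f) x = f'' := by
  obtain ⟨f', hf', hf''⟩ := hf
  have h : deriv f =ᶠ[𝓝 x] f' := hf'.mono fun y hy => hy.deriv
  rw [h.deriv_eq, hf''.deriv]

lemma const_mul (hf : HasSecondDerivAt f f'' x) (c : ℝ) :
    HasSecondDerivAt (fun y => c * f y) (c * f'') x := by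
  obtain ⟨f', hf', hf''⟩ := hf
  exact ⟨fun y => c * f' y, hf'.mono fun y hy => hy.const_mul c, hf''.const_mul c⟩

lemma sum {ι : Type*} {s : Finset ι} {f : ι → ℝ → ℝ} {f'' : ι → ℝ}
    (hf : ∀ i ∈ s, HasSecondDerivAt (f i) (f'' i) x) :
    HasSecondDerivAt (fun y => ∑ i ∈ s, f i y) (∑ i ∈ s, f'' i) x := by
  choose! f' hf' hf'' using hf
  refine ⟨fun y => ∑ i ∈ s, f' i y, ?_, HasDerivAt.fun_sum hf''⟩
  filter_upwards [(eventually_all_finset s).2 hf'] with y hy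
  exact HasDerivAt.fun_sum hy

end HasSecondDerivAt

lemma d2E_self (E : (ℤ → ℝ × ℝ) → ℝ) (y u : ℤ → ℝ × ℝ) :
    d2E E y u u = deriv (deriv fun r : ℝ => E (fun ℓ => y ℓ + r • u ℓ)) 0 := by
  unfold d2E
  congr 1
  funext s
  simp only [add_assoc, ← add_smul]
  simpa using deriv_comp_add_const (f := fun r : ℝ => E fun ℓ => y ℓ + r • u ℓ) (a := s) (x := 0)

lemma hasDerivAt_enorm2_add_smul (a b : ℝ × ℝ) {t : ℝ} (ht : enorm2 (a + t • b) ≠ 0) :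
    HasDerivAt (fun t : ℝ => enorm2 (a + t • b)) (edot (a + t • b) b / enorm2 (a + t • b)) t := by
  have h1 : HasDerivAt (fun t : ℝ => a.1 + t * b.1) b.1 t := by
    simpa using ((hasDerivAt_id t).mul_const b.1).const_add a.1
  have h2 : HasDerivAt (fun t : ℝ => a.2 + t * b.2) b.2 t := by
    simpa using ((hasDerivAt_id t).mul_const b.2).const_add a.2
  have hq : (a.1 + t * b.1) ^ 2 + (a.2 + t * b.2) ^ 2 ≠ 0 := fun h => ht (by
    simp [enorm2, h])
  have he : (fun t : ℝ => enorm2 (a + t • b))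
      = fun t => √((a.1 + t * b.1) ^ 2 + (a.2 + t * b.2) ^ 2) := by
    funext t
    simp [enorm2]
  rw [he]
  refine (((h1.fun_pow 2).fun_add (h2.fun_pow 2)).sqrt hq).congr_deriv ?_
  simp only [edot, enorm2, Prod.fst_add, Prod.snd_add, Prod.smul_fst, Prod.smul_snd, smul_eq_mul]
  field_simp
  norm_num

lemma hasDerivAt_edot_add_smul (a b : ℝ × ℝ) (t : ℝ) :
    HasDerivAt (fun t : ℝ => edot (a + t • b) b) (edot b b) t := by
  have he : (fun t : ℝ => edot (a + t • b) b) = fun t => edot a b + t * edot b b := by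
    funext t
    simp only [edot, Prod.fst_add, Prod.snd_add, Prod.smul_fst, Prod.smul_snd, smul_eq_mul]
    ring
  rw [he]
  simpa using ((hasDerivAt_id t).mul_const (edot b b)).const_add (edot a b)

lemma hasSecondDerivAt_comp_enorm2 {ψ ψ' : ℝ → ℝ} {ψ'' F : ℝ}
    (hψ : ∀ r, 0 < r → HasDerivAt ψ (ψ' r) r) (hψ' : HasDerivAt ψ' ψ'' F) (hF : 0 < F)
    {a : ℝ × ℝ} (ha : enorm2 a = F) (b : ℝ × ℝ) :
    HasSecondDerivAt (fun t => ψ (enorm2 (a + t • b)))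
      (ψ'' * (edot a b / F) ^ 2 + ψ' F / F * (edot b b - (edot a b / F) ^ 2)) 0 := by
  have ha0 : enorm2 (a + (0 : ℝ) • b) = F := by rw [zero_smul, add_zero, ha]
  have hn0 := hasDerivAt_enorm2_add_smul a b (ha0.trans_ne hF.ne')
  rw [ha0, zero_smul, add_zero] at hn0
  refine ⟨fun t => ψ' (enorm2 (a + t • b)) * (edot (a + t • b) b / enorm2 (a + t • b)), ?_, ?_⟩
  · have hpos : ∀ᶠ t in 𝓝 (0 : ℝ), 0 < enorm2 (a + t • b) :=
      hn0.continuousAt.eventually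
        (lt_mem_nhds (show 0 < enorm2 (a + (0 : ℝ) • b) by rw [ha0]; exact hF))
    filter_upwards [hpos] with t ht
    exact (hψ _ ht).comp t (hasDerivAt_enorm2_add_smul a b ht.ne')
  · have hψ0 : HasDerivAt ψ' ψ'' ((fun t : ℝ => enorm2 (a + t • b)) 0) := by
      simpa only [ha0] using hψ'
    have hq := (hasDerivAt_edot_add_smul a b 0).fun_div hn0 (ha0.trans_ne hF.ne')
    refine ((hψ0.comp 0 hn0).fun_mul hq).congr_deriv ?_
    simp only [Function.comp, zero_smul, add_zero, ha]
    field_simp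

section UniformChain

variable {N : ℕ} {ε F : ℝ} {φ : ℝ → ℝ} {y : ℤ → ℝ × ℝ}

lemma d2E_ECB_eq (hφ : ContDiffOn ℝ 2 φ (Set.Ioi 0)) (hF : 0 < F)
    (hy : ∀ ℓ, enorm2 (bd ε y ℓ) = F) (u : ℤ → ℝ × ℝ) :
    d2E (ECB N ε φ) y u u = ε * ∑ ℓ ∈ Icc (1 : ℤ) N,
      ((deriv (deriv φ) F + 4 * deriv (deriv φ) (2 * F)) * (edot (bd ε y ℓ) (bd ε u ℓ) / F) ^ 2
        + (deriv φ F + 2 * deriv φ (2 * F)) / F *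
          (edot (bd ε u ℓ) (bd ε u ℓ) - (edot (bd ε y ℓ) (bd ε u ℓ) / F) ^ 2)) := by
  have hφ' : ∀ r, 0 < r → HasDerivAt φ (deriv φ r) r := fun r hr =>
    ((hφ.differentiableOn (by norm_num)).differentiableAt (Ioi_mem_nhds hr)).hasDerivAt
  have hφ'' : ∀ r, 0 < r → HasDerivAt (deriv φ) (deriv (deriv φ) r) r := fun r hr =>
    (((hφ.deriv_of_isOpen isOpen_Ioi (m := 1) (by norm_num)).differentiableOn one_ne_zero)
      |>.differentiableAt (Ioi_mem_nhds hr)).hasDerivAt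
  have hψ : ∀ r, 0 < r → HasDerivAt (fun r => φ r + φ (2 * r))
      (deriv φ r + 2 * deriv φ (2 * r)) r := fun r hr => by
    have h2 := (hφ' (2 * r) (by positivity)).comp r ((hasDerivAt_id r).const_mul 2)
    refine ((hφ' r hr).add h2).congr_deriv ?_
    simp only [mul_one]
    ring
  have hψ' : HasDerivAt (fun r => deriv φ r + 2 * deriv φ (2 * r))
      (deriv (deriv φ) F + 4 * deriv (deriv φ) (2 * F)) F := by
    have h2 := (hφ'' (2 * F) (by positivity)).comp F ((hasDerivAt_id F).const_mul 2)
    refine ((hφ'' F hF).add (h2.const_mul 2)).congr_deriv ?_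
    simp only [mul_one]
    ring
  rw [d2E_self]
  simp only [ECB, bd_add_smul]
  exact ((HasSecondDerivAt.sum fun ℓ _ =>
    hasSecondDerivAt_comp_enorm2 hψ hψ' hF (hy ℓ) (bd ε u ℓ)).const_mul ε).deriv_deriv

lemma min_mul_nrm_sq_le_d2E_ECB (hφ : ContDiffOn ℝ 2 φ (Set.Ioi 0)) (hF : 0 < F)
    (hy : ∀ ℓ, enorm2 (bd ε y ℓ) = F) (hε : 0 ≤ ε) (u : ℤ → ℝ × ℝ) :
    min (deriv (deriv φ) F + 4 * deriv (deriv φ) (2 * F))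
        ((deriv φ F + 2 * deriv φ (2 * F)) / F) * nrm N ε (bd ε u) ^ 2
      ≤ d2E (ECB N ε φ) y u u := by
  rw [d2E_ECB_eq hφ hF hy, nrm_sq hε, mul_left_comm, mul_sum]
  gcongr with ℓ
  exact min_mul_le_add_mul_sub _ _ (sq_nonneg _) (sq_edot_div_le (hy ℓ) hF _)

lemma d2E_ECB_smul_self (hφ : ContDiffOn ℝ 2 φ (Set.Ioi 0)) (hF : 0 < F)
    (hy : ∀ ℓ, enorm2 (bd ε y ℓ) = F) (hε : 0 ≤ ε) (C : ℝ) :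
    d2E (ECB N ε φ) y (fun ℓ => C • y ℓ) (fun ℓ => C • y ℓ)
      = (deriv (deriv φ) F + 4 * deriv (deriv φ) (2 * F))
        * nrm N ε (bd ε fun ℓ => C • y ℓ) ^ 2 := by
  rw [d2E_ECB_eq hφ hF hy, nrm_sq hε, mul_left_comm]
  congr 1
  rw [mul_sum]
  refine sum_congr rfl fun ℓ _ => ?_
  rw [bd_smul, edot_smul_right, edot_smul_left, edot_smul_right, edot_self, hy]
  field_simp
  ring

lemma d2E_ECB_zigzag {ρ : ℝ} (hφ : ContDiffOn ℝ 2 φ (Set.Ioi 0)) (hF : 0 < F)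
    (hy : ∀ ℓ, enorm2 (bd ε y ℓ) = F) (hρ : ∀ ℓ, enorm2 (y ℓ) = ρ) (hε : 0 ≤ ε) (C : ℝ) :
    d2E (ECB N ε φ) y (fun ℓ => ((-1 : ℝ) ^ ℓ * C) • y ℓ) (fun ℓ => ((-1 : ℝ) ^ ℓ * C) • y ℓ)
      = (deriv φ F + 2 * deriv φ (2 * F)) / F
        * nrm N ε (bd ε fun ℓ => ((-1 : ℝ) ^ ℓ * C) • y ℓ) ^ 2 := by
  rw [d2E_ECB_eq hφ hF hy, nrm_sq hε, mul_left_comm]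
  congr 1
  rw [mul_sum]
  refine sum_congr rfl fun ℓ _ => ?_
  rw [edot_bd_zigzag_eq_zero hρ]
  ring

end UniformChain

theorem stmt_4 (N : ℕ) (hN : 4 ≤ N) (ε : ℝ) (hε : ε = (N : ℝ)⁻¹)
    (φ : ℝ → ℝ) (hφ : ContDiffOn ℝ 2 φ (Set.Ioi 0)) (F : ℝ) (hF : 0 < F) :
    (∀ u : ℤ → ℝ × ℝ, IsDisp N u →
      d2E (ECB N ε φ) (yCirc ε F) u u ≥
        min (deriv (deriv φ) F + 4 * deriv (deriv φ) (2 * F))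
            ((deriv φ F + 2 * deriv φ (2 * F)) / F) * (nrm N ε (bd ε u)) ^ 2) ∧
    (∀ C : ℝ, 0 < C →
      IsDisp N (fun ℓ : ℤ => C • yCirc ε F ℓ) ∧
      d2E (ECB N ε φ) (yCirc ε F)
          (fun ℓ : ℤ => C • yCirc ε F ℓ) (fun ℓ : ℤ => C • yCirc ε F ℓ) =
        (deriv (deriv φ) F + 4 * deriv (deriv φ) (2 * F)) *
          (nrm N ε (bd ε (fun ℓ : ℤ => C • yCirc ε F ℓ))) ^ 2) ∧
    (Even N → ∀ C : ℝ, 0 < C →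
      IsDisp N (fun ℓ : ℤ => ((-1 : ℝ) ^ ℓ * C) • yCirc ε F ℓ) ∧
      d2E (ECB N ε φ) (yCirc ε F)
          (fun ℓ : ℤ => ((-1 : ℝ) ^ ℓ * C) • yCirc ε F ℓ)
          (fun ℓ : ℤ => ((-1 : ℝ) ^ ℓ * C) • yCirc ε F ℓ) =
        ((deriv φ F + 2 * deriv φ (2 * F)) / F) *
          (nrm N ε (bd ε (fun ℓ : ℤ => ((-1 : ℝ) ^ ℓ * C) • yCirc ε F ℓ))) ^ 2) := by
  subst hε
  have hN1 : (1 : ℝ) < N := by exact_mod_cast (show 1 < N by omega)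
  have hε0 : (0 : ℝ) < (N : ℝ)⁻¹ := by positivity
  have hs : Real.sin (π * (N : ℝ)⁻¹) ≠ 0 := by
    refine (Real.sin_pos_of_pos_of_lt_pi (by positivity) ?_).ne'
    exact mul_lt_of_lt_one_right pi_pos (inv_lt_one_of_one_lt₀ hN1)
  have hy : ∀ ℓ, enorm2 (bd (N : ℝ)⁻¹ (yCirc (N : ℝ)⁻¹ F) ℓ) = F := fun ℓ =>
    (enorm2_bd_yCirc F hε0.ne' hs ℓ).trans (abs_of_pos hF)
  refine ⟨fun u _ => min_mul_nrm_sq_le_d2E_ECB hφ hF hy hε0.le u,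
    fun C _ => ⟨(isDisp_yCirc (by omega) F).smul C, d2E_ECB_smul_self hφ hF hy hε0.le C⟩,
    fun hE C _ => ⟨isDisp_zigzag_yCirc (by omega) hE F C,
      d2E_ECB_zigzag hφ hF hy (enorm2_yCirc _ F) hε0.le C⟩⟩
end
end

section
/- Let y_F be the linear chain with nearest-neighbor spacing Fε, let f ∈ 𝒰̃, and let u^a ∈ 𝒰̃ satisfy δE^a(y_F)[v] + δ²E^a(y_F)[u^a, v] = ⟨f, v⟩ for all v ∈ 𝒰̃. Then for every v ∈ 𝒰̃, | δE^CB(y_F)[v] + δ²E^CB(y_F)[u^a, v] − ⟨f, v⟩ | ≤ ε² |φ''(2F)| ‖(u^a)'''‖_{ℓ²_ε} ‖v'‖_{ℓ²_ε}. -/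
noncomputable section

open Real Finset

/-! At the linear chain every nearest-neighbour bond has length `F` and every
next-nearest-neighbour bond length `2F`, so both variations of both energies are explicit finite
sums in the strains `u'_ℓ`, `v'_ℓ`. The nearest-neighbour parts of `E^a` and `E^CB` coincide. In
the next-nearest-neighbour parts, periodicity turns the differences into telescoping sums
(summation by parts), and what is left is `-ε² φ''(2F) ⟨u'''_{·+1}, v'⟩`, because the second
difference of `u'` is `ε² u'''`. Cauchy–Schwarz and the shift invariance of the periodic norm give
the bound. -/

lemma sum_Icc_one_comp_add_one_sub {G : Type*} [AddCommGroup G] (h : ℤ → G) (n : ℕ) :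
    ∑ ℓ ∈ Icc (1 : ℤ) n, (h (ℓ + 1) - h ℓ) = h (n + 1) - h 1 := by
  induction n with
  | zero => simp
  | succ n ih =>
    rw [Nat.cast_succ, ← insert_Icc_right_eq_Icc_add_one (by omega), sum_insert (by simp), ih]
    abel

lemma Function.Periodic.sum_Icc_comp_add_one {G : Type*} [AddCommGroup G] {h : ℤ → G} {N : ℕ}
    (hh : Function.Periodic h N) : ∑ ℓ ∈ Icc (1 : ℤ) N, h (ℓ + 1) = ∑ ℓ ∈ Icc (1 : ℤ) N, h ℓ := by
  rw [← sub_eq_zero, ← sum_sub_distrib, sum_Icc_one_comp_add_one_sub, add_comm, hh, sub_self]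

lemma Function.Periodic.sum_Icc_sub_comp_add_one {G : Type*} [AddCommGroup G] {h : ℤ → G} {N : ℕ}
    (hh : Function.Periodic h N) : ∑ ℓ ∈ Icc (1 : ℤ) N, (h ℓ - h (ℓ + 1)) = 0 := by
  rw [sum_sub_distrib, hh.sum_Icc_comp_add_one, sub_self]

lemma periodic_bd {ε : ℝ} {w : ℤ → ℝ × ℝ} {c : ℤ} (hw : Function.Periodic w c) :
    Function.Periodic (bd ε w) c := fun ℓ => by
  rw [bd, bd, add_sub_right_comm, hw, hw]

lemma bd_snd_eq_zero {ε : ℝ} {w : ℤ → ℝ × ℝ} (hw : ∀ ℓ, (w ℓ).2 = 0) (ℓ : ℤ) :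
    (bd ε w ℓ).2 = 0 := by
  simp [bd, hw]

lemma sq_smul_bd_bd {ε : ℝ} (hε : ε ≠ 0) (w : ℤ → ℝ × ℝ) (ℓ : ℤ) :
    ε ^ 2 • bd ε (bd ε w) (ℓ + 1) = w (ℓ + 1) - 2 • w ℓ + w (ℓ - 1) := by
  ext <;> simp [bd] <;> field_simp <;> ring

lemma abs_edot_le (v w : ℝ × ℝ) : |edot v w| ≤ enorm2 v * enorm2 w := by
  rw [enorm2, enorm2, ← Real.sqrt_mul (by positivity)]
  exact Real.abs_le_sqrt (by rw [edot]; nlinarith [sq_nonneg (v.1 * w.2 - v.2 * w.1)])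

lemma abs_ip_le_nrm_mul_nrm (N : ℕ) {ε : ℝ} (hε : 0 ≤ ε) (v w : ℤ → ℝ × ℝ) :
    |ip N ε v w| ≤ nrm N ε v * nrm N ε w := by
  rw [ip, nrm, nrm, Real.sqrt_mul hε, Real.sqrt_mul hε, abs_mul, abs_of_nonneg hε]
  calc ε * |∑ ℓ ∈ Icc (1 : ℤ) N, edot (v ℓ) (w ℓ)|
      ≤ ε * ∑ ℓ ∈ Icc (1 : ℤ) N, enorm2 (v ℓ) * enorm2 (w ℓ) := by
        gcongr
        exact (abs_sum_le_sum_abs _ _).trans (sum_le_sum fun ℓ _ => abs_edot_le _ _)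
    _ ≤ ε * (√(∑ ℓ ∈ Icc (1 : ℤ) N, enorm2 (v ℓ) ^ 2)
          * √(∑ ℓ ∈ Icc (1 : ℤ) N, enorm2 (w ℓ) ^ 2)) := by
        gcongr
        exact Real.sum_mul_le_sqrt_mul_sqrt _ _ _
    _ = √ε * √(∑ ℓ ∈ Icc (1 : ℤ) N, enorm2 (v ℓ) ^ 2)
          * (√ε * √(∑ ℓ ∈ Icc (1 : ℤ) N, enorm2 (w ℓ) ^ 2)) := by
        rw [mul_mul_mul_comm, Real.mul_self_sqrt hε]

lemma Function.Periodic.nrm_comp_add_one {N : ℕ} {w : ℤ → ℝ × ℝ} (hw : Function.Periodic w N)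
    (ε : ℝ) : nrm N ε (fun ℓ => w (ℓ + 1)) = nrm N ε w := by
  have hw2 : Function.Periodic (fun ℓ => enorm2 (w ℓ) ^ 2) N := fun ℓ => by simp only [hw ℓ]
  rw [nrm, nrm, hw2.sum_Icc_comp_add_one]

lemma eventually_pos_add_mul {c : ℝ} (hc : 0 < c) (a : ℝ) : ∀ᶠ t in nhds (0 : ℝ), 0 < c + t * a :=
  ((continuous_const.add (continuous_id.mul continuous_const)).tendsto' 0 c (by simp)).eventually
    (eventually_gt_nhds hc)

lemma hasDerivAt_comp_abs_add_mul {φ : ℝ → ℝ} (hφ : ContDiffOn ℝ 2 φ (Set.Ioi 0)) {c : ℝ}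
    (hc : 0 < c) (a : ℝ) : HasDerivAt (fun t => φ |c + t * a|) (deriv φ c * a) 0 := by
  have hφc : HasDerivAt φ (deriv φ c) (c + 0 * a) := by
    rw [zero_mul, add_zero]
    exact ((hφ.differentiableOn two_ne_zero).differentiableAt (Ioi_mem_nhds hc)).hasDerivAt
  refine (hφc.comp 0 ((hasDerivAt_mul_const a).const_add c)).congr_of_eventuallyEq ?_
  filter_upwards [eventually_pos_add_mul hc a] with t ht
  simp [abs_of_pos ht]

lemma hasDerivAt_deriv_comp_add_mul {φ : ℝ → ℝ} (hφ : ContDiffOn ℝ 2 φ (Set.Ioi 0)) {c : ℝ}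
    (hc : 0 < c) (b : ℝ) :
    HasDerivAt (fun s => deriv φ (c + s * b)) (deriv (deriv φ) c * b) 0 := by
  have hφ' : HasDerivAt (deriv φ) (deriv (deriv φ) c) (c + 0 * b) := by
    rw [zero_mul, add_zero]
    have hφ₁ : ContDiffOn ℝ 1 (deriv φ) (Set.Ioi 0) :=
      hφ.deriv_of_isOpen isOpen_Ioi (by norm_num)
    exact ((hφ₁.differentiableOn one_ne_zero).differentiableAt (Ioi_mem_nhds hc)).hasDerivAt
  exact hφ'.comp 0 ((hasDerivAt_mul_const b).const_add c)

lemma hasDerivAt_bondSum {φ : ℝ → ℝ} (hφ : ContDiffOn ℝ 2 φ (Set.Ioi 0)) (ε : ℝ) (S : Finset ℤ)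
    {c₁ c₂ : ℤ → ℝ} (hc₁ : ∀ ℓ ∈ S, 0 < c₁ ℓ) (hc₂ : ∀ ℓ ∈ S, 0 < c₂ ℓ) (a₁ a₂ : ℤ → ℝ) :
    HasDerivAt (fun t => ε * ∑ ℓ ∈ S, (φ |c₁ ℓ + t * a₁ ℓ| + φ |c₂ ℓ + t * a₂ ℓ|))
      (ε * ∑ ℓ ∈ S, (deriv φ (c₁ ℓ) * a₁ ℓ + deriv φ (c₂ ℓ) * a₂ ℓ)) 0 :=
  .const_mul ε (.fun_sum fun ℓ hℓ =>
    (hasDerivAt_comp_abs_add_mul hφ (hc₁ ℓ hℓ) _).add (hasDerivAt_comp_abs_add_mul hφ (hc₂ ℓ hℓ) _))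

lemma deriv_deriv_bondSum {φ : ℝ → ℝ} (hφ : ContDiffOn ℝ 2 φ (Set.Ioi 0)) (ε : ℝ) (S : Finset ℤ)
    {c₁ c₂ : ℝ} (hc₁ : 0 < c₁) (hc₂ : 0 < c₂) (a₁ a₂ b₁ b₂ : ℤ → ℝ) :
    deriv (fun s => deriv (fun t =>
        ε * ∑ ℓ ∈ S, (φ |c₁ + s * b₁ ℓ + t * a₁ ℓ| + φ |c₂ + s * b₂ ℓ + t * a₂ ℓ|)) 0) 0
      = ε * ∑ ℓ ∈ S, (deriv (deriv φ) c₁ * b₁ ℓ * a₁ ℓ + deriv (deriv φ) c₂ * b₂ ℓ * a₂ ℓ) := by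
  have hpos : ∀ᶠ s in nhds (0 : ℝ), ∀ ℓ ∈ S, 0 < c₁ + s * b₁ ℓ ∧ 0 < c₂ + s * b₂ ℓ :=
    (Filter.eventually_all_finset S).2 fun ℓ _ =>
      (eventually_pos_add_mul hc₁ (b₁ ℓ)).and (eventually_pos_add_mul hc₂ (b₂ ℓ))
  have hfirst : (fun s => deriv (fun t =>
        ε * ∑ ℓ ∈ S, (φ |c₁ + s * b₁ ℓ + t * a₁ ℓ| + φ |c₂ + s * b₂ ℓ + t * a₂ ℓ|)) 0)
      =ᶠ[nhds 0] fun s =>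
        ε * ∑ ℓ ∈ S, (deriv φ (c₁ + s * b₁ ℓ) * a₁ ℓ + deriv φ (c₂ + s * b₂ ℓ) * a₂ ℓ) := by
    filter_upwards [hpos] with s hs
    exact (hasDerivAt_bondSum hφ ε S (fun ℓ hℓ => (hs ℓ hℓ).1) (fun ℓ hℓ => (hs ℓ hℓ).2)
      a₁ a₂).deriv
  rw [hfirst.deriv_eq]
  exact (HasDerivAt.const_mul ε (.fun_sum fun ℓ _ =>
    ((hasDerivAt_deriv_comp_add_mul hφ hc₁ (b₁ ℓ)).mul_const (a₁ ℓ)).add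
      ((hasDerivAt_deriv_comp_add_mul hφ hc₂ (b₂ ℓ)).mul_const (a₂ ℓ)))).deriv

lemma enorm2_mk_zero (x : ℝ) : enorm2 (x, 0) = |x| := by
  simp [enorm2, Real.sqrt_sq_eq_abs]

lemma bd_yLin_add_smul_add_smul {ε : ℝ} (hε : ε ≠ 0) (F t s : ℝ) {u v : ℤ → ℝ × ℝ}
    (hu : ∀ ℓ, (u ℓ).2 = 0) (hv : ∀ ℓ, (v ℓ).2 = 0) (ℓ : ℤ) :
    bd ε (fun m => yLin ε F m + t • u m + s • v m) ℓ
      = (F + s * (bd ε v ℓ).1 + t * (bd ε u ℓ).1, 0) := by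
  ext
  · simp [bd, yLin]
    field_simp
    ring
  · simp [bd, yLin, hu, hv]

lemma Ea_yLin_add_smul_add_smul (N : ℕ) {ε : ℝ} (hε : ε ≠ 0) (φ : ℝ → ℝ) (F t s : ℝ)
    {u v : ℤ → ℝ × ℝ} (hu : ∀ ℓ, (u ℓ).2 = 0) (hv : ∀ ℓ, (v ℓ).2 = 0) :
    Ea N ε φ (fun m => yLin ε F m + t • u m + s • v m)
      = ε * ∑ ℓ ∈ Icc (1 : ℤ) N, (φ |F + s * (bd ε v ℓ).1 + t * (bd ε u ℓ).1|
          + φ |2 * F + s * ((bd ε v (ℓ + 1)).1 + (bd ε v ℓ).1)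
              + t * ((bd ε u (ℓ + 1)).1 + (bd ε u ℓ).1)|) := by
  simp only [Ea, bd_yLin_add_smul_add_smul hε F t s hu hv, Prod.mk_add_mk, add_zero, enorm2_mk_zero]
  ring_nf

lemma ECB_yLin_add_smul_add_smul (N : ℕ) {ε : ℝ} (hε : ε ≠ 0) (φ : ℝ → ℝ) (F t s : ℝ)
    {u v : ℤ → ℝ × ℝ} (hu : ∀ ℓ, (u ℓ).2 = 0) (hv : ∀ ℓ, (v ℓ).2 = 0) :
    ECB N ε φ (fun m => yLin ε F m + t • u m + s • v m)
      = ε * ∑ ℓ ∈ Icc (1 : ℤ) N, (φ |F + s * (bd ε v ℓ).1 + t * (bd ε u ℓ).1|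
          + φ |2 * F + s * (2 * (bd ε v ℓ).1) + t * (2 * (bd ε u ℓ).1)|) := by
  have two_mul_abs (x : ℝ) : 2 * |x| = |2 * x| := by rw [abs_mul, abs_two]
  simp only [ECB, bd_yLin_add_smul_add_smul hε F t s hu hv, enorm2_mk_zero, two_mul_abs]
  ring_nf

lemma dE_Ea_yLin (N : ℕ) {ε : ℝ} (hε : ε ≠ 0) {φ : ℝ → ℝ} (hφ : ContDiffOn ℝ 2 φ (Set.Ioi 0))
    {F : ℝ} (hF : 0 < F) {v : ℤ → ℝ × ℝ} (hv : ∀ ℓ, (v ℓ).2 = 0) :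
    dE (Ea N ε φ) (yLin ε F) v = ε * ∑ ℓ ∈ Icc (1 : ℤ) N, (deriv φ F * (bd ε v ℓ).1
      + deriv φ (2 * F) * ((bd ε v (ℓ + 1)).1 + (bd ε v ℓ).1)) := by
  have hpath (t : ℝ) : Ea N ε φ (fun m => yLin ε F m + t • v m)
      = ε * ∑ ℓ ∈ Icc (1 : ℤ) N, (φ |F + t * (bd ε v ℓ).1|
          + φ |2 * F + t * ((bd ε v (ℓ + 1)).1 + (bd ε v ℓ).1)|) := by
    simpa using Ea_yLin_add_smul_add_smul N hε φ F t 0 hv hv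
  rw [dE, funext hpath]
  exact (hasDerivAt_bondSum hφ ε _ (fun _ _ => hF) (fun _ _ => by positivity) _ _).deriv

lemma dE_ECB_yLin (N : ℕ) {ε : ℝ} (hε : ε ≠ 0) {φ : ℝ → ℝ} (hφ : ContDiffOn ℝ 2 φ (Set.Ioi 0))
    {F : ℝ} (hF : 0 < F) {v : ℤ → ℝ × ℝ} (hv : ∀ ℓ, (v ℓ).2 = 0) :
    dE (ECB N ε φ) (yLin ε F) v = ε * ∑ ℓ ∈ Icc (1 : ℤ) N, (deriv φ F * (bd ε v ℓ).1
      + deriv φ (2 * F) * (2 * (bd ε v ℓ).1)) := by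
  have hpath (t : ℝ) : ECB N ε φ (fun m => yLin ε F m + t • v m)
      = ε * ∑ ℓ ∈ Icc (1 : ℤ) N, (φ |F + t * (bd ε v ℓ).1|
          + φ |2 * F + t * (2 * (bd ε v ℓ).1)|) := by
    simpa using ECB_yLin_add_smul_add_smul N hε φ F t 0 hv hv
  rw [dE, funext hpath]
  exact (hasDerivAt_bondSum hφ ε _ (fun _ _ => hF) (fun _ _ => by positivity) _ _).deriv

lemma d2E_Ea_yLin (N : ℕ) {ε : ℝ} (hε : ε ≠ 0) {φ : ℝ → ℝ} (hφ : ContDiffOn ℝ 2 φ (Set.Ioi 0))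
    {F : ℝ} (hF : 0 < F) {u v : ℤ → ℝ × ℝ} (hu : ∀ ℓ, (u ℓ).2 = 0) (hv : ∀ ℓ, (v ℓ).2 = 0) :
    d2E (Ea N ε φ) (yLin ε F) u v = ε * ∑ ℓ ∈ Icc (1 : ℤ) N,
      (deriv (deriv φ) F * (bd ε v ℓ).1 * (bd ε u ℓ).1
        + deriv (deriv φ) (2 * F) * ((bd ε v (ℓ + 1)).1 + (bd ε v ℓ).1)
          * ((bd ε u (ℓ + 1)).1 + (bd ε u ℓ).1)) := by
  simp only [d2E, Ea_yLin_add_smul_add_smul N hε φ F _ _ hu hv]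
  exact deriv_deriv_bondSum hφ ε _ hF (by positivity) _ _ _ _

lemma d2E_ECB_yLin (N : ℕ) {ε : ℝ} (hε : ε ≠ 0) {φ : ℝ → ℝ} (hφ : ContDiffOn ℝ 2 φ (Set.Ioi 0))
    {F : ℝ} (hF : 0 < F) {u v : ℤ → ℝ × ℝ} (hu : ∀ ℓ, (u ℓ).2 = 0) (hv : ∀ ℓ, (v ℓ).2 = 0) :
    d2E (ECB N ε φ) (yLin ε F) u v = ε * ∑ ℓ ∈ Icc (1 : ℤ) N,
      (deriv (deriv φ) F * (bd ε v ℓ).1 * (bd ε u ℓ).1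
        + deriv (deriv φ) (2 * F) * (2 * (bd ε v ℓ).1) * (2 * (bd ε u ℓ).1)) := by
  simp only [d2E, ECB_yLin_add_smul_add_smul N hε φ F _ _ hu hv]
  exact deriv_deriv_bondSum hφ ε _ hF (by positivity) _ _ _ _

lemma dE_add_d2E_ECB_sub_Ea_yLin (N : ℕ) {ε : ℝ} (hε : ε ≠ 0) {φ : ℝ → ℝ}
    (hφ : ContDiffOn ℝ 2 φ (Set.Ioi 0)) {F : ℝ} (hF : 0 < F) {u v : ℤ → ℝ × ℝ}
    (hu : Function.Periodic u N) (hv : Function.Periodic v N)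
    (hu₂ : ∀ ℓ, (u ℓ).2 = 0) (hv₂ : ∀ ℓ, (v ℓ).2 = 0) :
    dE (ECB N ε φ) (yLin ε F) v + d2E (ECB N ε φ) (yLin ε F) u v
        - (dE (Ea N ε φ) (yLin ε F) v + d2E (Ea N ε φ) (yLin ε F) u v)
      = -(ε ^ 2 * deriv (deriv φ) (2 * F))
          * ip N ε (fun ℓ => bd ε (bd ε (bd ε u)) (ℓ + 1)) (bd ε v) := by
  set A := deriv φ (2 * F)
  set B := deriv (deriv φ) (2 * F)
  have third_diff (ℓ : ℤ) : ε ^ 2 * (bd ε (bd ε (bd ε u)) (ℓ + 1)).1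
      = (bd ε u (ℓ + 1)).1 - 2 * (bd ε u ℓ).1 + (bd ε u (ℓ - 1)).1 := by
    simpa using congrArg Prod.fst (sq_smul_bd_bd hε (bd ε u) ℓ)
  have hq : Function.Periodic (fun ℓ => (bd ε v ℓ).1) N := fun ℓ => by
    simp only [periodic_bd hv ℓ]
  have hqp : Function.Periodic (fun ℓ => (bd ε v ℓ).1 * (bd ε u ℓ).1) N := fun ℓ => by
    simp only [periodic_bd hv ℓ, periodic_bd hu ℓ]
  have hqp' : Function.Periodic (fun ℓ => (bd ε v ℓ).1 * (bd ε u (ℓ - 1)).1) N := fun ℓ => by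
    simp only [periodic_bd hv ℓ, add_sub_right_comm, periodic_bd hu (ℓ - 1)]
  rw [dE_ECB_yLin N hε hφ hF hv₂, d2E_ECB_yLin N hε hφ hF hu₂ hv₂, dE_Ea_yLin N hε hφ hF hv₂,
    d2E_Ea_yLin N hε hφ hF hu₂ hv₂]
  simp only [← mul_add, ← mul_sub, ← sum_add_distrib, ← sum_sub_distrib]
  calc _ = ε * ∑ ℓ ∈ Icc (1 : ℤ) N,
        (A * ((bd ε v ℓ).1 - (bd ε v (ℓ + 1)).1)
          + B * ((bd ε v ℓ).1 * (bd ε u ℓ).1 - (bd ε v (ℓ + 1)).1 * (bd ε u (ℓ + 1)).1)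
          + B * ((bd ε v ℓ).1 * (bd ε u (ℓ - 1)).1 - (bd ε v (ℓ + 1)).1 * (bd ε u (ℓ + 1 - 1)).1)
          - ε ^ 2 * B * ((bd ε (bd ε (bd ε u)) (ℓ + 1)).1 * (bd ε v ℓ).1)) := by
        congr 1
        refine sum_congr rfl fun ℓ _ => ?_
        rw [add_sub_cancel_right]
        linear_combination B * (bd ε v ℓ).1 * third_diff ℓ
    _ = _ := by
        rw [sum_sub_distrib, sum_add_distrib, sum_add_distrib, ← mul_sum, ← mul_sum, ← mul_sum,
          ← mul_sum, hq.sum_Icc_sub_comp_add_one, hqp.sum_Icc_sub_comp_add_one,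
          hqp'.sum_Icc_sub_comp_add_one]
        simp only [ip, edot, bd_snd_eq_zero hv₂, mul_zero, add_zero]
        ring

theorem stmt_8_general (N : ℕ) (hN : 4 ≤ N) (ε : ℝ) (hε : ε = (N : ℝ)⁻¹)
    (φ : ℝ → ℝ) (hφ : ContDiffOn ℝ 2 φ (Set.Ioi 0)) (F : ℝ) (hF : 0 < F)
    (f ua : ℤ → ℝ × ℝ) (hua : IsDisp1D N ua)
    (heq : ∀ v : ℤ → ℝ × ℝ, IsDisp1D N v →
      dE (Ea N ε φ) (yLin ε F) v + d2E (Ea N ε φ) (yLin ε F) ua v = ip N ε f v) :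
    ∀ v : ℤ → ℝ × ℝ, IsDisp1D N v →
      |dE (ECB N ε φ) (yLin ε F) v + d2E (ECB N ε φ) (yLin ε F) ua v - ip N ε f v| ≤
        ε ^ 2 * |deriv (deriv φ) (2 * F)| *
          nrm N ε (bd ε (bd ε (bd ε ua))) * nrm N ε (bd ε v) := by
  intro v hv
  have hε₀ : 0 < ε := hε ▸ inv_pos.2 (by exact_mod_cast (by omega : 0 < N))
  have hu''' : Function.Periodic (bd ε (bd ε (bd ε ua))) N :=
    periodic_bd (periodic_bd (periodic_bd hua.1.1))
  rw [← heq v hv, dE_add_d2E_ECB_sub_Ea_yLin N hε₀.ne' hφ hF hua.1.1 hv.1.1 hua.2 hv.2,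
    abs_mul, abs_neg, abs_mul, abs_of_nonneg (sq_nonneg ε), mul_assoc _ (nrm _ _ _),
    ← hu'''.nrm_comp_add_one ε]
  gcongr
  exact abs_ip_le_nrm_mul_nrm N hε₀.le _ _

theorem stmt_8 (N : ℕ) (hN : 4 ≤ N) (ε : ℝ) (hε : ε = (N : ℝ)⁻¹)
    (φ : ℝ → ℝ) (hφ : ContDiffOn ℝ 2 φ (Set.Ioi 0)) (F : ℝ) (hF : 0 < F)
    (f ua : ℤ → ℝ × ℝ) (hf : IsDisp1D N f) (hua : IsDisp1D N ua)
    (heq : ∀ v : ℤ → ℝ × ℝ, IsDisp1D N v →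
      dE (Ea N ε φ) (yLin ε F) v + d2E (Ea N ε φ) (yLin ε F) ua v = ip N ε f v) :
    ∀ v : ℤ → ℝ × ℝ, IsDisp1D N v →
      |dE (ECB N ε φ) (yLin ε F) v + d2E (ECB N ε φ) (yLin ε F) ua v - ip N ε f v| ≤
        ε ^ 2 * |deriv (deriv φ) (2 * F)| *
          nrm N ε (bd ε (bd ε (bd ε ua))) * nrm N ε (bd ε v) :=
  stmt_8_general N hN ε hε φ hφ F hF f ua hua heq
end
end
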